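/- (Viscosity supersolution property of the value function, part of Theorem 4.2.) For every (t,x) ∈ (0,T)×ℝ and every (q₀,p₀,P₀) in the parabolic subjet of V at (t,x), one has q₀ + inf over (q,π) ∈ [0,∞)×[0,∞) of G(t,x,q,π,p₀,P₀) ≤ 0. -/

import Mathlib

/-!
Write `z = e^{r(T-t)} x + g₁(t)`. Then `V = ½ z²` where `z ≥ 0` and `V = ½ e^{2A₁(T-t)} z²`
where `z < 0`; both branches vanish to second order on `{z = 0}`, so `V` is differentiable
everywhere. Comparing the subjet with `V` along the two coordinate slices through `(t, x)` gives
`p₀ = V_x` and `q₀ ≤ V_t` and, when `z < 0` (where `V(t, ·)` is locally an exact quadratic),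
`P₀ ≤ V_xx`. If `z ≥ 0`, then `V_t + V_x (r x + f) = 0`, so the zero control works. If `z < 0`,
then `p₀ < 0`, and the minimiser of the Hamiltonian with `P₀` raised to `V_xx` attains exactly
`-V_t`: this is where `A₁` comes from.
-/

open Real Set Asymptotics Filter Topology

theorem nonpos_of_isLittleO_max {α : Type*} {l : Filter α} [l.NeBot] {u v e : α → ℝ} {c : ℝ}
    (hv : ∀ᶠ s in l, 0 < v s) (hu : (fun s => max (u s) 0) =o[l] v) (he : e =o[l] v)
    (hle : ∀ᶠ s in l, c * v s ≤ u s + e s) : c ≤ 0 := by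
  by_contra! hc
  obtain ⟨s, hvs, hus, hes, hles⟩ :=
    (hv.and ((hu.def (by positivity : 0 < c / 3)).and ((he.def (by positivity : 0 < c / 3)).and
      hle))).exists
  simp only [Real.norm_eq_abs, abs_of_pos hvs] at hus hes
  nlinarith [le_max_left (u s) 0, le_abs_self (max (u s) 0), le_abs_self (e s)]

theorem le_of_hasDerivWithinAt_Ioi {ψ : ℝ → ℝ} {t q D : ℝ}
    (hψ : HasDerivWithinAt ψ D (Ioi t) t)
    (hjet : (fun s => max (ψ t + q * (s - t) - ψ s) 0) =o[𝓝[>] t] fun s => s - t) : q ≤ D := by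
  have := nonpos_of_isLittleO_max (c := q - D) (l := 𝓝[>] t)
    (eventually_mem_nhdsWithin.mono fun s hs => sub_pos.2 hs) hjet
    (hasDerivWithinAt_iff_isLittleO.1 hψ)
    (Eventually.of_forall fun s => le_of_eq (by simp only [smul_eq_mul]; ring))
  linarith

theorem isLittleO_sq_sub_sub (x : ℝ) : (fun y => (y - x) ^ 2) =o[𝓝 x] fun y => y - x := by
  simpa only [Real.norm_eq_abs, sq_abs] using isLittleO_pow_sub_sub x one_lt_two

theorem eq_of_hasDerivAt_of_isLittleO {χ : ℝ → ℝ} {x p p₀ P : ℝ} (hχ : HasDerivAt χ p x)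
    (hjet : (fun y => max (χ x + p₀ * (y - x) + 1 / 2 * P * (y - x) ^ 2 - χ y) 0)
      =o[𝓝 x] fun y => (y - x) ^ 2) : p₀ = p := by
  have hu := hjet.trans (isLittleO_sq_sub_sub x)
  have he :
      (fun y => χ y - χ x - (y - x) * p - 1 / 2 * P * (y - x) ^ 2) =o[𝓝 x] fun y => y - x :=
    (hasDerivAt_iff_isLittleO.1 hχ).sub ((isLittleO_sq_sub_sub x).const_mul_left _)
  have hsplit : ∀ y, (p₀ - p) * (y - x)
      = (χ x + p₀ * (y - x) + 1 / 2 * P * (y - x) ^ 2 - χ y)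
        + (χ y - χ x - (y - x) * p - 1 / 2 * P * (y - x) ^ 2) := fun y => by ring
  have hle := nonpos_of_isLittleO_max (l := 𝓝[>] x)
    (eventually_mem_nhdsWithin.mono fun y hy => sub_pos.2 hy)
    (hu.mono nhdsWithin_le_nhds) (he.mono nhdsWithin_le_nhds)
    (Eventually.of_forall fun y => (hsplit y).le)
  have hneg : (fun y => x - y) = fun y => -(y - x) := funext fun y => (neg_sub y x).symm
  have hge := nonpos_of_isLittleO_max (c := p - p₀) (l := 𝓝[<] x)
    (eventually_mem_nhdsWithin.mono fun y hy => sub_pos.2 hy)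
    (hneg ▸ hu.neg_right.mono nhdsWithin_le_nhds) (hneg ▸ he.neg_right.mono nhdsWithin_le_nhds)
    (Eventually.of_forall fun y => le_of_eq (by rw [← hsplit y]; ring))
  linarith

theorem le_of_eventually_le_of_isLittleO {χ : ℝ → ℝ} {x p P Q : ℝ}
    (hχ : ∀ᶠ y in 𝓝[>] x, χ y ≤ χ x + p * (y - x) + 1 / 2 * Q * (y - x) ^ 2)
    (hjet : (fun y => max (χ x + p * (y - x) + 1 / 2 * P * (y - x) ^ 2 - χ y) 0)
      =o[𝓝[>] x] fun y => (y - x) ^ 2) : P ≤ Q := by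
  have := nonpos_of_isLittleO_max (c := (P - Q) / 2) (l := 𝓝[>] x)
    (eventually_mem_nhdsWithin.mono fun y hy => pow_pos (sub_pos.2 hy) 2) hjet
    (isLittleO_zero _ _) (hχ.mono fun y hy => by linarith)
  linarith

noncomputable def splitSq (k w : ℝ) : ℝ :=
  if 0 ≤ w then 1 / 2 * w ^ 2 else 1 / 2 * k * w ^ 2

theorem splitSq_eventuallyEq_of_pos {k w : ℝ → ℝ} {t : ℝ} (hw : ContinuousAt w t)
    (ht : 0 < w t) :
    (fun s => splitSq (k s) (w s)) =ᶠ[𝓝 t] fun s => 1 / 2 * w s ^ 2 :=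
  (hw.eventually (lt_mem_nhds ht)).mono fun _ hs => if_pos hs.le

theorem splitSq_eventuallyEq_of_neg {k w : ℝ → ℝ} {t : ℝ} (hw : ContinuousAt w t)
    (ht : w t < 0) :
    (fun s => splitSq (k s) (w s)) =ᶠ[𝓝 t] fun s => 1 / 2 * k s * w s ^ 2 :=
  (hw.eventually (gt_mem_nhds ht)).mono fun _ hs => if_neg hs.not_ge

theorem splitSq_isLittleO_of_eq_zero {k w : ℝ → ℝ} {k' w' t : ℝ} (hk : HasDerivAt k k' t)
    (hw : HasDerivAt w w' t) (ht : w t = 0) :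
    (fun s => splitSq (k s) (w s)) =o[𝓝 t] fun s => s - t := by
  have hsq : (fun s => w s * w s) =o[𝓝 t] fun s => (s - t) * 1 := by
    have hO : w =O[𝓝 t] fun s => s - t := by simpa [ht] using hw.isBigO_sub
    refine hO.mul_isLittleO (isLittleO_one_iff ℝ |>.2 ?_)
    simpa [ht] using hw.continuousAt.tendsto
  have hm :
      (fun s => if 0 ≤ w s then (1 / 2 : ℝ) else 1 / 2 * k s) =O[𝓝 t] fun _ => (1 : ℝ) := by
    refine IsBigO.of_bound (1 / 2 + 1 / 2 * |k t| + 1) ?_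
    filter_upwards [hk.continuousAt.abs.eventually (gt_mem_nhds (lt_add_one |k t|))] with s hs
    split_ifs <;> simp only [norm_one, mul_one, Real.norm_eq_abs, abs_mul] <;> norm_num <;>
      linarith [abs_nonneg (k t)]
  simpa [splitSq, sq, apply_ite (· * (w _ * w _)), mul_assoc] using hm.mul_isLittleO hsq

theorem hasDerivAt_splitSq {k w : ℝ → ℝ} {k' w' t : ℝ} (hk : HasDerivAt k k' t)
    (hw : HasDerivAt w w' t) :
    HasDerivAt (fun s => splitSq (k s) (w s))
      (if 0 ≤ w t then w t * w' else 1 / 2 * k' * w t ^ 2 + k t * w t * w') t := by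
  rcases lt_trichotomy (w t) 0 with hneg | hzero | hpos
  · rw [if_neg hneg.not_ge]
    refine (((hk.mul (hw.pow 2)).const_mul (1 / 2 : ℝ)).congr_of_eventuallyEq
      ((splitSq_eventuallyEq_of_neg hw.continuousAt hneg).trans
        (.of_forall fun s => ?_))).congr_deriv ?_
    · simp only [Pi.mul_apply, Pi.pow_apply]; ring
    · simp only [Pi.pow_apply]; push_cast; ring
  · rw [if_pos hzero.ge, hzero, zero_mul, hasDerivAt_iff_isLittleO]
    simpa [splitSq, hzero] using splitSq_isLittleO_of_eq_zero hk hw hzero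
  · rw [if_pos hpos.le]
    refine (((hw.pow 2).const_mul (1 / 2 : ℝ)).congr_of_eventuallyEq
      (splitSq_eventuallyEq_of_pos hw.continuousAt hpos)).congr_deriv ?_
    push_cast; ring

theorem splitSq_affine_eventuallyEq_of_neg {c E g x : ℝ} (h : E * x + g < 0) :
    ∀ᶠ y in 𝓝 x, splitSq c (E * y + g) = splitSq c (E * x + g) + c * E * (E * x + g) * (y - x)
      + 1 / 2 * (c * E ^ 2) * (y - x) ^ 2 := by
  filter_upwards [splitSq_eventuallyEq_of_neg (k := fun _ => c) (w := fun y => E * y + g)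
    (by fun_prop) h] with y hy
  rw [hy, splitSq, if_neg h.not_ge]
  ring

theorem hasDerivAt_exp_mul_sub (κ T t : ℝ) :
    HasDerivAt (fun s => exp (κ * (T - s))) (-κ * exp (κ * (T - t))) t := by
  simpa [mul_comm] using (((hasDerivAt_id t).const_sub T).const_mul κ).exp

theorem hasDerivAt_exp_mul_sub_affine {r : ℝ} (hr : r ≠ 0) (T x f t : ℝ) :
    HasDerivAt (fun s => exp (r * (T - s)) * x + f * (exp (r * (T - s)) - 1) / r)
      (-(exp (r * (T - t)) * (r * x + f))) t := by
  have he := hasDerivAt_exp_mul_sub r T t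
  refine ((he.mul_const x).add (((he.sub_const 1).const_mul f).div_const r)).congr_deriv ?_
  field_simp
  ring

-- `(q, p, P) ∈ D^{1,2,-}V(t, x)`; the one-sided `- o(·)` is expressed through `max (·) 0`.
def IsParabolicSubjet (V : ℝ → ℝ → ℝ) (T t x q p P : ℝ) : Prop :=
  (fun z : ℝ × ℝ => max (V t x + q * (z.1 - t) + p * (z.2 - x) + 1 / 2 * P * (z.2 - x) ^ 2
    - V z.1 z.2) 0) =o[𝓝[Icc 0 T ×ˢ univ] (t, x)] fun z => |z.1 - t| + |z.2 - x| ^ 2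

namespace IsParabolicSubjet

variable {V : ℝ → ℝ → ℝ} {T t x q p P : ℝ}

theorem time_slice (h : IsParabolicSubjet V T t x q p P) (ht : t ∈ Ico 0 T) :
    (fun s => max (V t x + q * (s - t) - V s x) 0) =o[𝓝[>] t] fun s => s - t := by
  have hmaps : Tendsto (fun s => (s, x)) (𝓝[>] t) (𝓝[Icc 0 T ×ˢ univ] (t, x)) := by
    refine tendsto_nhdsWithin_iff.2 ⟨(Continuous.tendsto (by fun_prop) t).mono_left
      nhdsWithin_le_nhds, ?_⟩
    filter_upwards [Ioo_mem_nhdsGT ht.2] with s hs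
    exact ⟨⟨ht.1.trans hs.1.le, hs.2.le⟩, mem_univ x⟩
  refine (h.comp_tendsto hmaps).congr' (.of_forall fun s => by simp) ?_
  filter_upwards [self_mem_nhdsWithin] with s hs
  simp [abs_of_pos (sub_pos.2 (show t < s from hs))]

theorem space_slice (h : IsParabolicSubjet V T t x q p P) (ht : t ∈ Icc 0 T) :
    (fun y => max (V t x + p * (y - x) + 1 / 2 * P * (y - x) ^ 2 - V t y) 0)
      =o[𝓝 x] fun y => (y - x) ^ 2 := by
  have hmaps : Tendsto (fun y => (t, y)) (𝓝 x) (𝓝[Icc 0 T ×ˢ univ] (t, x)) :=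
    tendsto_nhdsWithin_iff.2 ⟨Continuous.tendsto (by fun_prop) x,
      .of_forall fun y => ⟨ht, mem_univ y⟩⟩
  exact (h.comp_tendsto hmaps).congr' (.of_forall fun _ => by simp) (.of_forall fun _ => by simp)

end IsParabolicSubjet

section Hamiltonian

variable (r μ σ a b η f : ℝ)

noncomputable def hamiltonian (x q pi p P : ℝ) : ℝ :=
  p * (r * x + a * η * q + (μ - r) * pi + f) + 1 / 2 * P * (b ^ 2 * q ^ 2 + σ ^ 2 * pi ^ 2)

variable {r μ σ a b η f}

theorem hamiltonian_mono {x q pi p P Q : ℝ} (h : P ≤ Q) :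
    hamiltonian r μ σ a b η f x q pi p P ≤ hamiltonian r μ σ a b η f x q pi p Q := by
  unfold hamiltonian
  gcongr

theorem hamiltonian_argmin (hb : b ≠ 0) (hσ : σ ≠ 0) (x : ℝ) {p P : ℝ} (hP : P ≠ 0) :
    hamiltonian r μ σ a b η f x (-p * (a * η) / (P * b ^ 2)) (-p * (μ - r) / (P * σ ^ 2)) p P
      = p * (r * x + f)
        - p ^ 2 / P * ((μ - r) ^ 2 / (2 * σ ^ 2) + a ^ 2 * η ^ 2 / (2 * b ^ 2)) := by
  unfold hamiltonian
  field_simp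
  ring

theorem exists_hamiltonian_le (hrμ : r ≤ μ) (ha : 0 ≤ a) (hη : 0 ≤ η) (hb : b ≠ 0)
    (hσ : σ ≠ 0) {x q₀ p P Q : ℝ} (hp : p ≤ 0) (hQ : 0 < Q) (hPQ : P ≤ Q)
    (hq₀ : q₀ ≤ p ^ 2 / Q * ((μ - r) ^ 2 / (2 * σ ^ 2) + a ^ 2 * η ^ 2 / (2 * b ^ 2))
      - p * (r * x + f)) :
    ∃ q pi, 0 ≤ q ∧ 0 ≤ pi ∧ q₀ + hamiltonian r μ σ a b η f x q pi p P ≤ 0 := by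
  have hp' : 0 ≤ -p := neg_nonneg.2 hp
  have hμr : 0 ≤ μ - r := sub_nonneg.2 hrμ
  refine ⟨-p * (a * η) / (Q * b ^ 2), -p * (μ - r) / (Q * σ ^ 2), by positivity, by positivity,
    (add_le_add le_rfl (hamiltonian_mono hPQ)).trans ?_⟩
  rw [hamiltonian_argmin hb hσ x hQ.ne']
  linarith

end Hamiltonian

theorem stmt_12_general
    (T r μ σ a b η : ℝ)
    (hr : 0 < r) (hσ : 0 < σ) (ha : 0 < a) (hb : 0 < b)
    (hη : 0 < η) (hμr : r < μ)
    (f : ℝ)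
    (A₁ : ℝ) (hA₁ : A₁ = -(μ - r) ^ 2 / (2 * σ ^ 2) - a ^ 2 * η ^ 2 / (2 * b ^ 2))
    (g₁ : ℝ → ℝ) (hg₁ : ∀ t, g₁ t = f * (exp (r * (T - t)) - 1) / r)
    (G : ℝ → ℝ → ℝ → ℝ → ℝ → ℝ → ℝ)
    (hG : ∀ t x q pi p P, G t x q pi p P
      = p * (r * x + a * η * q + (μ - r) * pi + f)
        + (1 / 2) * P * (b ^ 2 * q ^ 2 + σ ^ 2 * pi ^ 2))
    (V : ℝ → ℝ → ℝ)
    (hV : ∀ t x, V t x =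
      if 0 ≤ exp (r * (T - t)) * x + g₁ t
      then (1 / 2) * (exp (r * (T - t)) * x + g₁ t) ^ 2
      else (1 / 2) * exp (2 * A₁ * (T - t)) * (exp (r * (T - t)) * x + g₁ t) ^ 2) :
    ∀ t x : ℝ, t ∈ Ioo (0 : ℝ) T → ∀ q₀ p₀ P₀ : ℝ,
      ((fun p : ℝ × ℝ =>
          max (V t x + q₀ * (p.1 - t) + p₀ * (p.2 - x)
            + (1 / 2) * P₀ * (p.2 - x) ^ 2 - V p.1 p.2) 0)
        =o[nhdsWithin (t, x) (Icc (0 : ℝ) T ×ˢ (univ : Set ℝ))]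
        (fun p : ℝ × ℝ => |p.1 - t| + |p.2 - x| ^ 2)) →
      ∀ ε : ℝ, 0 < ε → ∃ q pi : ℝ, 0 ≤ q ∧ 0 ≤ pi ∧ q₀ + G t x q pi p₀ P₀ < ε := by
  intro t x ht q₀ p₀ P₀ hjet ε hε
  have hV' : ∀ s y, V s y = splitSq (exp (2 * A₁ * (T - s))) (exp (r * (T - s)) * y + g₁ s) :=
    hV
  have hjet_t := IsParabolicSubjet.time_slice hjet (Ioo_subset_Ico_self ht)
  have hjet_x := IsParabolicSubjet.space_slice hjet (Ioo_subset_Icc_self ht)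
  simp only [hV'] at hjet_t hjet_x
  have hw : HasDerivAt (fun s => exp (r * (T - s)) * x + g₁ s)
      (-(exp (r * (T - t)) * (r * x + f))) t := by
    simpa only [← hg₁] using hasDerivAt_exp_mul_sub_affine hr.ne' T x f t
  have hq₀ := le_of_hasDerivWithinAt_Ioi
    (hasDerivAt_splitSq (hasDerivAt_exp_mul_sub _ T t) hw).hasDerivWithinAt hjet_t
  have hp₀ := eq_of_hasDerivAt_of_isLittleO (hasDerivAt_splitSq (hasDerivAt_const x _)
    (((hasDerivAt_id' x).const_mul (exp (r * (T - t)))).add_const (g₁ t))) hjet_x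
  have hE := exp_pos (r * (T - t))
  have hc := exp_pos (2 * A₁ * (T - t))
  generalize exp (r * (T - t)) = E at *
  generalize exp (2 * A₁ * (T - t)) = c at *
  by_cases hz : 0 ≤ E * x + g₁ t
  · simp only [if_pos hz, mul_one] at hq₀ hp₀
    refine ⟨0, 0, le_rfl, le_rfl, ?_⟩
    rw [hG, hp₀]
    linarith
  · simp only [if_neg hz, mul_one] at hq₀ hp₀
    obtain rfl : p₀ = c * E * (E * x + g₁ t) := by rw [hp₀]; ring
    have hP₀ : P₀ ≤ c * E ^ 2 := le_of_eventually_le_of_isLittleO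
      (((splitSq_affine_eventuallyEq_of_neg (not_le.1 hz)).filter_mono nhdsWithin_le_nhds).mono
        fun _ hy => hy.le) (hjet_x.mono nhdsWithin_le_nhds)
    have hp : c * E * (E * x + g₁ t) ≤ 0 :=
      mul_nonpos_of_nonneg_of_nonpos (by positivity) (not_le.1 hz).le
    have hratio : (c * E * (E * x + g₁ t)) ^ 2 / (c * E ^ 2) = c * (E * x + g₁ t) ^ 2 := by
      field_simp
    obtain ⟨q, pi, hq, hpi, hH⟩ := exists_hamiltonian_le (f := f) (x := x) (q₀ := q₀)
      hμr.le ha.le hη.le hb.ne' hσ.ne' hp (by positivity) hP₀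
      (by rw [hratio]; rw [hA₁] at hq₀; linear_combination hq₀)
    exact ⟨q, pi, hq, hpi, by rw [hG]; exact hH.trans_lt hε⟩

/-- viscosity supersolution property: for every (t,x) ∈ (0,T)×ℝ and
every (q₀,p₀,P₀) in the parabolic subjet of V at (t,x),
q₀ + inf_{(q,π) ∈ [0,∞)²} G(t,x,q,π,p₀,P₀) ≤ 0; the inequality
"q₀ + inf ≤ 0" (where the infimum may be −∞) is rendered as: for every ε > 0 there
are admissible (q,π) with q₀ + G(t,x,q,π,p₀,P₀) < ε. -/
theorem stmt_12
    (T r μ σ a b η θ d γ : ℝ)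
    (hT : 0 < T) (hr : 0 < r) (hσ : 0 < σ) (ha : 0 < a) (hb : 0 < b)
    (hη : 0 < η) (hμr : r < μ)
    (f : ℝ) (hf : f = a * θ - a * η + (d - γ) * r)
    (A₁ : ℝ) (hA₁ : A₁ = -(μ - r) ^ 2 / (2 * σ ^ 2) - a ^ 2 * η ^ 2 / (2 * b ^ 2))
    (g₁ : ℝ → ℝ) (hg₁ : ∀ t, g₁ t = f * (exp (r * (T - t)) - 1) / r)
    (G : ℝ → ℝ → ℝ → ℝ → ℝ → ℝ → ℝ)
    (hG : ∀ t x q pi p P, G t x q pi p P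
      = p * (r * x + a * η * q + (μ - r) * pi + f)
        + (1 / 2) * P * (b ^ 2 * q ^ 2 + σ ^ 2 * pi ^ 2))
    (V : ℝ → ℝ → ℝ)
    (hV : ∀ t x, V t x =
      if 0 ≤ exp (r * (T - t)) * x + g₁ t
      then (1 / 2) * (exp (r * (T - t)) * x + g₁ t) ^ 2
      else (1 / 2) * exp (2 * A₁ * (T - t)) * (exp (r * (T - t)) * x + g₁ t) ^ 2) :
    ∀ t x : ℝ, t ∈ Ioo (0 : ℝ) T → ∀ q₀ p₀ P₀ : ℝ,
      ((fun p : ℝ × ℝ =>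
          max (V t x + q₀ * (p.1 - t) + p₀ * (p.2 - x)
            + (1 / 2) * P₀ * (p.2 - x) ^ 2 - V p.1 p.2) 0)
        =o[nhdsWithin (t, x) (Icc (0 : ℝ) T ×ˢ (univ : Set ℝ))]
        (fun p : ℝ × ℝ => |p.1 - t| + |p.2 - x| ^ 2)) →
      ∀ ε : ℝ, 0 < ε → ∃ q pi : ℝ, 0 ≤ q ∧ 0 ≤ pi ∧ q₀ + G t x q pi p₀ P₀ < ε :=
  stmt_12_general T r μ σ a b η hr hσ ha hb hη hμr f A₁ hA₁ g₁ hg₁ G hG V hV
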